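/- Let {ψ_j}_{j∈J} be a frame in H with bounds C and D, and let {ω_j}_{j∈J} ⊆ Z(A) be a semi-normalized sequence of positive invertible central elements with bounds 0 < a ≤ b (i.e. a·1 ≤ ω_j ≤ b·1 for all j). Then {ω_j·ψ_j}_{j∈J} is a frame in H with bounds a²C and b²D: for every f ∈ H the series Σ_{j∈J} ⟨f,ω_j·ψ_j⟩⟨ω_j·ψ_j,f⟩ converges in norm in A and a²C⟨f,f⟩ ≤ Σ_{j∈J} ⟨f,ω_j·ψ_j⟩⟨ω_j·ψ_j,f⟩ ≤ b²D⟨f,f⟩. -/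

import Mathlib

open scoped RightActions

/-- The class `CStarModule` as it stood in Mathlib (December 2024): a right `A`-module
structure given by `SMul Aᵐᵒᵖ E`, with inner product `A`-linear on the right,
`inner x (y <• a) = inner x y * a`.  Mathlib's current `CStarModule` uses a left action
instead, so the old class is reproduced here verbatim under a new name. -/
class OldCStarModule (A E : Type*) [NonUnitalSemiring A] [StarRing A] [Module ℂ A]
    [AddCommGroup E] [Module ℂ E] [PartialOrder A] [SMul Aᵐᵒᵖ E] [Norm A] [Norm E]
    extends Inner A E where
  inner_add_right {x} {y} {z} : inner x (y + z) = inner x y + inner x z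
  inner_self_nonneg {x} : 0 ≤ inner x x
  inner_self {x} : inner x x = 0 ↔ x = 0
  inner_op_smul_right {a : A} {x y : E} : inner x (y <• a) = inner x y * a
  inner_smul_right_complex {z : ℂ} {x} {y} : inner x (z • y) = z • inner x y
  star_inner x y : star (inner x y) = inner y x
  norm_eq_sqrt_norm_inner_self x : ‖x‖ = Real.sqrt ‖inner x x‖

section

/- `A` is a unital C⋆-algebra (with its order coming from the positive cone), `H` is a
Hilbert C⋆-module over `A`, and `J` is a countable index set.  Following Mathlib, the
`A`-valued inner product `⟪f, g⟫ := inner g f` is `A`-linear in the first variable `f`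
(with respect to the module action `f <• a`), and the norm on `H` satisfies
`‖f‖ = ‖⟪f, f⟫‖ ^ (1/2)`. -/
variable {A : Type*} [CStarAlgebra A] [PartialOrder A] [StarOrderedRing A]
variable {H : Type*} [NormedAddCommGroup H] [NormedSpace ℂ H] [SMul Aᵐᵒᵖ H] [OldCStarModule A H]
variable {J : Type*} [Countable J]

local notation "⟪" f ", " g "⟫" => (inner (𝕜 := A) g f)

private lemma old_inner_op_smul_left {x y : H} {a : A} :
    inner (𝕜 := A) (x <• a) y = star a * inner (𝕜 := A) x y := by
  rw [← OldCStarModule.star_inner y (x <• a), OldCStarModule.inner_op_smul_right, star_mul,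
    OldCStarModule.star_inner]

private lemma central_rearrange (w x z : A) (hw : w ∈ Set.center A) (hsa : star w = w) :
    (star w * x) * (z * w) = x * (w * w) * z := by
  rw [hsa]
  calc (w * x) * (z * w) = (x * w) * (z * w) := by rw [hw.comm x]
    _ = x * (w * z * w) := by rw [mul_assoc, ← mul_assoc w z w]
    _ = x * (z * w * w) := by rw [hw.comm z]
    _ = x * (z * (w * w)) := by rw [mul_assoc z w w]
    _ = x * ((w * w) * z) := by rw [← (Set.mul_mem_center hw hw).comm z]
    _ = x * (w * w) * z := by rw [← mul_assoc]

private lemma sq_bounds (w : A) (a b : ℝ) (ha : 0 < a) (hab : a ≤ b) (hw0 : 0 ≤ w)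
    (hl : a • (1:A) ≤ w) (hu : w ≤ b • (1:A)) :
    (a ^ 2 : ℝ) • (1:A) ≤ w * w ∧ w * w ≤ (b ^ 2 : ℝ) • (1:A) := by
  have hb : 0 < b := lt_of_lt_of_le ha hab
  have hwsa : star w = w := (IsSelfAdjoint.of_nonneg hw0).star_eq
  constructor
  · rw [← sub_nonneg]
    have hs : 0 ≤ w - a • 1 := sub_nonneg.mpr hl
    have hssa : star (w - a • 1) = w - a • 1 := (IsSelfAdjoint.of_nonneg hs).star_eq
    have expand : w * w - (a ^ 2 : ℝ) • (1:A)
        = (w - a • 1) * (w - a • 1) + (2 * a) • (w - a • 1) := by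
      simp only [mul_sub, sub_mul, smul_mul_assoc, mul_smul_comm, smul_smul, one_mul, mul_one,
        smul_sub, sub_smul]
      module
    rw [expand]
    exact add_nonneg (by simpa [hssa] using star_mul_self_nonneg (w - a • 1))
      (smul_nonneg (by positivity) hs)
  · rcases subsingleton_or_nontrivial A with hA | hA
    · exact le_of_eq (Subsingleton.elim _ _)
    · have hnw : ‖w‖ ≤ b := by
        have := CStarAlgebra.norm_le_norm_of_nonneg_of_le hw0 hu
        simpa [norm_smul, abs_of_pos hb] using this
      have hww : IsSelfAdjoint (w * w) := by rw [IsSelfAdjoint, star_mul, hwsa]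
      have h1 : w * w ≤ algebraMap ℝ A ‖w * w‖ := hww.le_algebraMap_norm_self
      refine h1.trans ?_
      rw [Algebra.algebraMap_eq_smul_one, ← sub_nonneg, ← sub_smul]
      refine smul_nonneg ?_ zero_le_one
      have : ‖w * w‖ ≤ ‖w‖ * ‖w‖ := norm_mul_le w w
      nlinarith [norm_nonneg w]

/-- If `{ψ_j}` is a frame with bounds `C, D` and `{ω_j} ⊆ Z(A)` is a
semi-normalized sequence of positive invertible central elements with bounds
`0 < a ≤ b`, then `{ω_j·ψ_j}` is a frame with bounds `a²C` and `b²D`. -/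
theorem weighted_frame_of_semi_normalized
    (ψ : J → H) (C D : ℝ) (hC : 0 < C) (hD : 0 < D)
    (hsum : ∀ f : H, Summable fun j => ⟪f, ψ j⟫ * ⟪ψ j, f⟫)
    (hlow : ∀ f : H, C • ⟪f, f⟫ ≤ ∑' j, ⟪f, ψ j⟫ * ⟪ψ j, f⟫)
    (hupp : ∀ f : H, ∑' j, ⟪f, ψ j⟫ * ⟪ψ j, f⟫ ≤ D • ⟪f, f⟫)
    (ω : J → A) (hωc : ∀ j, ω j ∈ Set.center A)
    (hωpos : ∀ j, 0 ≤ ω j) (hωu : ∀ j, IsUnit (ω j))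
    (a b : ℝ) (ha : 0 < a) (hab : a ≤ b)
    (hωlow : ∀ j, a • (1 : A) ≤ ω j) (hωupp : ∀ j, ω j ≤ b • (1 : A)) :
    (∀ f : H, Summable fun j => ⟪f, ψ j <• ω j⟫ * ⟪ψ j <• ω j, f⟫) ∧
    (∀ f : H, (a ^ 2 * C) • ⟪f, f⟫ ≤ ∑' j, ⟪f, ψ j <• ω j⟫ * ⟪ψ j <• ω j, f⟫ ∧
      ∑' j, ⟪f, ψ j <• ω j⟫ * ⟪ψ j <• ω j, f⟫ ≤ (b ^ 2 * D) • ⟪f, f⟫) := by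
  classical
  have hwsa : ∀ j, star (ω j) = ω j := fun j => (IsSelfAdjoint.of_nonneg (hωpos j)).star_eq
  have hsq := fun j => sq_bounds (ω j) a b ha hab (hωpos j) (hωlow j) (hωupp j)
  -- rewrite the weighted terms
  have hterm : ∀ (f : H) (j : J), ⟪f, ψ j <• ω j⟫ * ⟪ψ j <• ω j, f⟫
      = star ⟪ψ j, f⟫ * (ω j * ω j) * ⟪ψ j, f⟫ := by
    intro f j
    rw [old_inner_op_smul_left, OldCStarModule.inner_op_smul_right,
      ← OldCStarModule.star_inner f (ψ j)]
    exact central_rearrange (ω j) (star (inner (𝕜 := A) f (ψ j))) (inner (𝕜 := A) f (ψ j))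
      (hωc j) (hwsa j)
  have ht : ∀ (f : H) (j : J), ⟪f, ψ j⟫ * ⟪ψ j, f⟫ = star ⟪ψ j, f⟫ * ⟪ψ j, f⟫ := by
    intro f j
    rw [← OldCStarModule.star_inner f (ψ j)]
  -- pointwise bounds
  have hnn : ∀ (f : H) (j : J), 0 ≤ ⟪f, ψ j <• ω j⟫ * ⟪ψ j <• ω j, f⟫ := by
    intro f j
    rw [hterm f j]
    exact star_left_conjugate_nonneg (le_trans (smul_nonneg (by positivity) zero_le_one) (hsq j).1) _
  have hlo : ∀ (f : H) (j : J),
      (a ^ 2 : ℝ) • (⟪f, ψ j⟫ * ⟪ψ j, f⟫) ≤ ⟪f, ψ j <• ω j⟫ * ⟪ψ j <• ω j, f⟫ := by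
    intro f j
    rw [hterm f j, ht f j]
    have := star_left_conjugate_le_conjugate (hsq j).1 (⟪ψ j, f⟫)
    simpa [smul_mul_assoc, mul_smul_comm, mul_one] using this
  have hhi : ∀ (f : H) (j : J),
      ⟪f, ψ j <• ω j⟫ * ⟪ψ j <• ω j, f⟫ ≤ (b ^ 2 : ℝ) • (⟪f, ψ j⟫ * ⟪ψ j, f⟫) := by
    intro f j
    rw [hterm f j, ht f j]
    have := star_left_conjugate_le_conjugate (hsq j).2 (⟪ψ j, f⟫)
    simpa [smul_mul_assoc, mul_smul_comm, mul_one] using this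
  -- summability
  have hsum' : ∀ f : H, Summable fun j => ⟪f, ψ j <• ω j⟫ * ⟪ψ j <• ω j, f⟫ := by
    intro f
    rw [summable_iff_vanishing_norm]
    intro ε hε
    have hg : Summable fun j => (b ^ 2 : ℝ) • (⟪f, ψ j⟫ * ⟪ψ j, f⟫) := (hsum f).const_smul _
    obtain ⟨s, hs⟩ := summable_iff_vanishing_norm.mp hg ε hε
    refine ⟨s, fun u hu => ?_⟩
    have h0 : 0 ≤ ∑ j ∈ u, ⟪f, ψ j <• ω j⟫ * ⟪ψ j <• ω j, f⟫ :=
      Finset.sum_nonneg fun j _ => hnn f j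
    have h1 : ∑ j ∈ u, ⟪f, ψ j <• ω j⟫ * ⟪ψ j <• ω j, f⟫
        ≤ ∑ j ∈ u, (b ^ 2 : ℝ) • (⟪f, ψ j⟫ * ⟪ψ j, f⟫) :=
      Finset.sum_le_sum fun j _ => hhi f j
    calc ‖∑ j ∈ u, ⟪f, ψ j <• ω j⟫ * ⟪ψ j <• ω j, f⟫‖
        ≤ ‖∑ j ∈ u, (b ^ 2 : ℝ) • (⟪f, ψ j⟫ * ⟪ψ j, f⟫)‖ :=
          CStarAlgebra.norm_le_norm_of_nonneg_of_le h0 h1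
      _ < ε := hs u hu
  refine ⟨hsum', fun f => ⟨?_, ?_⟩⟩
  · have h1 : ∑' j, (a ^ 2 : ℝ) • (⟪f, ψ j⟫ * ⟪ψ j, f⟫)
        ≤ ∑' j, ⟪f, ψ j <• ω j⟫ * ⟪ψ j <• ω j, f⟫ :=
      Summable.tsum_le_tsum (hlo f) ((hsum f).const_smul _) (hsum' f)
    rw [Summable.tsum_const_smul _ (hsum f)] at h1
    refine le_trans ?_ h1
    rw [mul_smul, ← sub_nonneg, ← smul_sub]
    exact smul_nonneg (by positivity) (sub_nonneg.mpr (hlow f))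
  · have h1 : ∑' j, ⟪f, ψ j <• ω j⟫ * ⟪ψ j <• ω j, f⟫
        ≤ ∑' j, (b ^ 2 : ℝ) • (⟪f, ψ j⟫ * ⟪ψ j, f⟫) :=
      Summable.tsum_le_tsum (hhi f) (hsum' f) ((hsum f).const_smul _)
    rw [Summable.tsum_const_smul _ (hsum f)] at h1
    refine h1.trans ?_
    rw [mul_smul, ← sub_nonneg, ← smul_sub]
    exact smul_nonneg (by positivity) (sub_nonneg.mpr (hupp f))

end
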